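/- For all r ≥ 0 the function g satisfies 0 ≤ g(r) ≤ (σ/2)·H(r₁), g is constant on [r₁, ∞), and its derivative satisfies 0 ≤ g'(r) ≤ σ wherever it exists (in particular for all r ∈ [0, r₁) and all r > r₁). -/

import Mathlib

/-- The modifier function `ℓ` from the paper:
`ℓ(r) = e^{-2} - e^{-2/(1-2r)}` for `r < 1/2` and `ℓ(r) = e^{-2}` for `r ≥ 1/2`. -/
noncomputable def ell : ℝ → ℝ := fun r =>
  if r < 1/2 then Real.exp (-2) - Real.exp (-2 / (1 - 2*r)) else Real.exp (-2)

/-- The comparison function `h(t) = cos(√k t) - (θ/√k) sin(√k t)` (case `k > 0`). -/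
noncomputable def hfun (k θ : ℝ) (t : ℝ) : ℝ :=
  Real.cos (Real.sqrt k * t) - (θ / Real.sqrt k) * Real.sin (Real.sqrt k * t)

/-- The first zero `t₀ = (1/√k) arcsin(√(k/(k+θ²)))` of `h`. -/
noncomputable def t0 (k θ : ℝ) : ℝ :=
  (1 / Real.sqrt k) * Real.arcsin (Real.sqrt (k / (k + θ^2)))

/-- `H(r) = (√(k+θ²)/k) cos(arcsin(√(k/(k+θ²))) - √k · min(r, r₁)) - θ/k`. -/
noncomputable def Hfun (k θ r₁ : ℝ) (r : ℝ) : ℝ :=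
  (Real.sqrt (k + θ^2) / k) *
    Real.cos (Real.arcsin (Real.sqrt (k / (k + θ^2))) - Real.sqrt k * min r r₁) - θ / k

/-- `g(r) = (σ e²/2) ℓ(H(r)/(2H(r₁))) H(r₁)`, i.e. the function `log φ` of the paper. -/
noncomputable def gfun (k θ r₁ σ : ℝ) (r : ℝ) : ℝ :=
  (σ * Real.exp 2 / 2) * ell (Hfun k θ r₁ r / (2 * Hfun k θ r₁ r₁)) * Hfun k θ r₁ r₁

/-!
On `[0, r₁]` the function `H` is `(√(k+θ²)/k)(cos(α - √k r) - cos α)` with `α = arcsin √(k/(k+θ²))`,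
since `cos α = θ/√(k+θ²)`; as `√k r₁ ≤ α ≤ π/2` it increases from `H(0) = 0`, with slope
`(√(k+θ²)/√k) sin(α - √k r) ≤ (√(k+θ²)/√k) sin α = 1`. Hence `H(r)/(2H(r₁)) ∈ [0, 1/2)` for `r < r₁`,
where `0 ≤ ℓ ≤ e⁻²` and `0 ≤ ℓ' ≤ 4e⁻²` (the latter is `e^{1-1/s} ≤ s`, i.e. `1 - 1/s ≤ log s`).
The chain rule then gives `0 ≤ g' ≤ (σe²/2) · 4e⁻² · H'/(2H(r₁)) · H(r₁) ≤ σ`.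
-/

open Real Set

lemma exp_neg_two_div_le {s : ℝ} (hs : 0 < s) : exp (-2 / s) ≤ exp (-2) * s ^ 2 := by
  have h : exp (1 - s⁻¹) ≤ s :=
    calc exp (1 - s⁻¹) ≤ exp (log s) := exp_le_exp.mpr (one_sub_inv_le_log_of_pos hs)
      _ = s := exp_log hs
  calc exp (-2 / s) = exp (-2) * exp (1 - s⁻¹) ^ 2 := by
        rw [← exp_nat_mul, ← exp_add]; ring_nf
    _ ≤ exp (-2) * s ^ 2 := by gcongr

lemma exp_two_mul_exp_neg_two : exp 2 * exp (-2) = 1 := by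
  rw [← exp_add]; norm_num

lemma ell_le (x : ℝ) : ell x ≤ exp (-2) := by
  unfold ell
  split_ifs
  · linarith [exp_pos (-2 / (1 - 2 * x))]
  · rfl

lemma ell_nonneg {x : ℝ} (hx : 0 ≤ x) : 0 ≤ ell x := by
  unfold ell
  split_ifs with h
  · have hs : 0 < 1 - 2 * x := by linarith
    have : -2 / (1 - 2 * x) ≤ -2 := by rw [div_le_iff₀ hs]; nlinarith
    linarith [exp_le_exp.mpr this]
  · positivity

lemma hasDerivAt_ell {x : ℝ} (hx : x < 1 / 2) :
    HasDerivAt ell (4 * exp (-2 / (1 - 2 * x)) / (1 - 2 * x) ^ 2) x := by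
  have hs : 1 - 2 * x ≠ 0 := by linarith
  have hden : HasDerivAt (fun y => 1 - 2 * y) (-2) x := by
    simpa using ((hasDerivAt_id x).const_mul 2).const_sub 1
  have h := (((hasDerivAt_const x (-2 : ℝ)).div hden hs).exp.const_sub (exp (-2))).congr_deriv
    (show _ = 4 * exp (-2 / (1 - 2 * x)) / (1 - 2 * x) ^ 2 by simp only [Pi.div_apply]; ring)
  refine h.congr_of_eventuallyEq ?_
  filter_upwards [Iio_mem_nhds hx] with y hy
  simp only [ell, if_pos (show y < 1 / 2 from hy), Pi.div_apply]

lemma exists_hasDerivAt_ell_le {x : ℝ} (hx : x < 1 / 2) :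
    ∃ d, HasDerivAt ell d x ∧ 0 ≤ d ∧ d ≤ 4 * exp (-2) := by
  have hs : 0 < 1 - 2 * x := by linarith
  refine ⟨_, hasDerivAt_ell hx, by positivity, ?_⟩
  rw [div_le_iff₀ (by positivity)]
  linarith [exp_neg_two_div_le hs]

section Hfun

variable {k θ r₁ : ℝ}

lemma sqrt_mul_le_arcsin_of_le_t0 (hk : 0 < k) {r : ℝ} (hr : r ≤ t0 k θ) :
    √k * r ≤ arcsin √(k / (k + θ ^ 2)) := by
  have hsk : 0 < √k := sqrt_pos.mpr hk
  calc √k * r ≤ √k * t0 k θ := by gcongr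
    _ = arcsin √(k / (k + θ ^ 2)) := by unfold t0; field_simp

lemma cos_arcsin_sqrt_div (hk : 0 < k) (hθ : 0 ≤ θ) :
    cos (arcsin √(k / (k + θ ^ 2))) = θ / √(k + θ ^ 2) := by
  have hkθ : 0 < k + θ ^ 2 := by positivity
  rw [cos_arcsin, sq_sqrt (by positivity), show 1 - k / (k + θ ^ 2) = θ ^ 2 / (k + θ ^ 2) by
    field_simp; ring, sqrt_div (sq_nonneg θ), sqrt_sq hθ]

lemma Hfun_zero (hk : 0 < k) (hθ : 0 ≤ θ) (hr₁ : 0 ≤ r₁) : Hfun k θ r₁ 0 = 0 := by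
  have : √(k + θ ^ 2) ≠ 0 := by positivity
  rw [Hfun, min_eq_left hr₁, mul_zero, sub_zero, cos_arcsin_sqrt_div hk hθ]
  field_simp
  ring

lemma Hfun_of_le {r : ℝ} (hr : r₁ ≤ r) : Hfun k θ r₁ r = Hfun k θ r₁ r₁ := by
  rw [Hfun, Hfun, min_eq_right hr, min_self]

lemma strictMonoOn_Hfun (hk : 0 < k) (hr₁ : r₁ ≤ t0 k θ) :
    StrictMonoOn (Hfun k θ r₁) (Icc 0 r₁) := by
  intro x hx y hy hxy
  have hsk : 0 < √k := sqrt_pos.mpr hk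
  have hα := sqrt_mul_le_arcsin_of_le_t0 hk hr₁
  have hαπ : arcsin √(k / (k + θ ^ 2)) ≤ π := (arcsin_le_pi_div_two _).trans (by linarith [pi_pos])
  have hcos := strictAntiOn_cos
    (a := arcsin √(k / (k + θ ^ 2)) - √k * y) (b := arcsin √(k / (k + θ ^ 2)) - √k * x)
    ⟨by nlinarith [hy.2], by nlinarith [hy.1]⟩ ⟨by nlinarith [hx.2], by nlinarith [hx.1]⟩
    (by nlinarith)
  have hA : 0 < √(k + θ ^ 2) / k := by positivity
  rw [Hfun, Hfun, min_eq_left hx.2, min_eq_left hy.2]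
  gcongr

lemma Hfun_nonneg (hk : 0 < k) (hθ : 0 ≤ θ) (hr₁ : 0 ≤ r₁) (hr₁' : r₁ ≤ t0 k θ) {r : ℝ}
    (hr : 0 ≤ r) : 0 ≤ Hfun k θ r₁ r := by
  have hmono := (strictMonoOn_Hfun hk hr₁').monotoneOn
  rw [← Hfun_zero hk hθ hr₁]
  rcases le_total r r₁ with hrr | hrr
  · exact hmono ⟨le_rfl, hr₁⟩ ⟨hr, hrr⟩ hr
  · rw [Hfun_of_le hrr]
    exact hmono ⟨le_rfl, hr₁⟩ ⟨hr₁, le_rfl⟩ hr₁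

lemma Hfun_pos (hk : 0 < k) (hθ : 0 ≤ θ) (hr₁ : 0 < r₁) (hr₁' : r₁ ≤ t0 k θ) :
    0 < Hfun k θ r₁ r₁ := by
  rw [← Hfun_zero hk hθ hr₁.le]
  exact strictMonoOn_Hfun hk hr₁' ⟨le_rfl, hr₁.le⟩ ⟨hr₁.le, le_rfl⟩ hr₁

lemma exists_hasDerivAt_Hfun_le (hk : 0 < k) (hr₁ : r₁ ≤ t0 k θ) {r : ℝ} (hr : 0 ≤ r)
    (hrr : r < r₁) : ∃ d, HasDerivAt (Hfun k θ r₁) d r ∧ 0 ≤ d ∧ d ≤ 1 := by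
  set α := arcsin √(k / (k + θ ^ 2)) with hα_def
  have hsk : 0 < √k := sqrt_pos.mpr hk
  have hkθ : 0 < k + θ ^ 2 := by positivity
  have hα : √k * r₁ ≤ α := sqrt_mul_le_arcsin_of_le_t0 hk hr₁
  have hαπ : α ≤ π / 2 := arcsin_le_pi_div_two _
  have hinner : HasDerivAt (fun x => α - √k * x) (-√k) r := by
    simpa using ((hasDerivAt_id r).const_mul √k).const_sub α
  have h := ((hinner.cos.const_mul (√(k + θ ^ 2) / k)).sub_const (θ / k)).congr_deriv
    (show _ = √(k + θ ^ 2) / k * √k * sin (α - √k * r) by ring)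
  refine ⟨_, h.congr_of_eventuallyEq ?_, ?_, ?_⟩
  · filter_upwards [Iio_mem_nhds hrr] with y hy
    rw [Hfun, min_eq_left (le_of_lt hy)]
  · have : 0 ≤ sin (α - √k * r) := sin_nonneg_of_nonneg_of_le_pi (by nlinarith)
      (by nlinarith [pi_pos])
    positivity
  · have hsin : sin (α - √k * r) ≤ sin α :=
      sin_le_sin_of_le_of_le_pi_div_two (by nlinarith [pi_pos]) hαπ (by nlinarith)
    have hsinα : sin α = √k / √(k + θ ^ 2) := by
      rw [hα_def, sin_arcsin (by linarith [sqrt_nonneg (k / (k + θ ^ 2))])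
        (sqrt_le_one.mpr ((div_le_one hkθ).mpr (by nlinarith))), sqrt_div hk.le]
    calc √(k + θ ^ 2) / k * √k * sin (α - √k * r)
        ≤ √(k + θ ^ 2) / k * √k * sin α := by gcongr
      _ = 1 := by
        rw [hsinα]
        field_simp
        rw [sq_sqrt hk.le]

end Hfun

section Gfun

variable {k θ r₁ σ : ℝ}

lemma gfun_of_le {r : ℝ} (hr : r₁ ≤ r) : gfun k θ r₁ σ r = gfun k θ r₁ σ r₁ := by
  rw [gfun, gfun, Hfun_of_le hr]

lemma deriv_gfun_of_lt {r : ℝ} (hr : r₁ < r) : deriv (gfun k θ r₁ σ) r = 0 := by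
  have : gfun k θ r₁ σ =ᶠ[nhds r] fun _ => gfun k θ r₁ σ r₁ := by
    filter_upwards [Ioi_mem_nhds hr] with y hy
    exact gfun_of_le (le_of_lt hy)
  rw [this.deriv_eq, deriv_const]

variable (hk : 0 < k) (hθ : 0 ≤ θ) (hr₁ : 0 < r₁) (hr₁' : r₁ ≤ t0 k θ) (hσ : 0 ≤ σ)
include hk hθ hr₁ hr₁' hσ

lemma gfun_nonneg {r : ℝ} (hr : 0 ≤ r) : 0 ≤ gfun k θ r₁ σ r := by
  have := Hfun_nonneg hk hθ hr₁.le hr₁' hr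
  have := Hfun_pos hk hθ hr₁ hr₁'
  have := ell_nonneg (x := Hfun k θ r₁ r / (2 * Hfun k θ r₁ r₁)) (by positivity)
  unfold gfun
  positivity

lemma gfun_le (r : ℝ) : gfun k θ r₁ σ r ≤ σ / 2 * Hfun k θ r₁ r₁ := by
  have := Hfun_pos hk hθ hr₁ hr₁'
  calc gfun k θ r₁ σ r ≤ σ * exp 2 / 2 * exp (-2) * Hfun k θ r₁ r₁ := by
        unfold gfun; gcongr; exact ell_le _
    _ = σ / 2 * Hfun k θ r₁ r₁ := by
        linear_combination σ / 2 * Hfun k θ r₁ r₁ * exp_two_mul_exp_neg_two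

lemma exists_hasDerivAt_gfun_le {r : ℝ} (hr : 0 ≤ r) (hrr : r < r₁) :
    ∃ d, HasDerivAt (gfun k θ r₁ σ) d r ∧ 0 ≤ d ∧ d ≤ σ := by
  set H₁ := Hfun k θ r₁ r₁
  have hH₁ : 0 < H₁ := Hfun_pos hk hθ hr₁ hr₁'
  have hu : Hfun k θ r₁ r / (2 * H₁) < 1 / 2 := by
    rw [div_lt_iff₀ (by positivity)]
    linarith [(strictMonoOn_Hfun hk hr₁') ⟨hr, hrr.le⟩ ⟨hr₁.le, le_rfl⟩ hrr]
  obtain ⟨dH, hdH, hdH₀, hdH₁⟩ := exists_hasDerivAt_Hfun_le hk hr₁' hr hrr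
  obtain ⟨dℓ, hdℓ, hdℓ₀, hdℓ₁⟩ := exists_hasDerivAt_ell_le hu
  refine ⟨_, ((hdℓ.comp r (hdH.div_const (2 * H₁))).const_mul (σ * exp 2 / 2)).mul_const H₁,
    by positivity, ?_⟩
  calc σ * exp 2 / 2 * (dℓ * (dH / (2 * H₁))) * H₁ = σ * exp 2 / 4 * dℓ * dH := by
        field_simp; ring
    _ ≤ σ * exp 2 / 4 * (4 * exp (-2)) * 1 := by gcongr
    _ = σ := by linear_combination σ * exp_two_mul_exp_neg_two

end Gfun

/-- For all `r ≥ 0`, `0 ≤ g(r) ≤ (σ/2) H(r₁)`; `g` is constant on `[r₁, ∞)`; and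
`0 ≤ g'(r) ≤ σ` wherever the derivative exists, in particular on `[0, r₁)` and `(r₁, ∞)`. -/
theorem gfun_bounds (k θ r₁ σ : ℝ) (hk : 0 < k) (hθ : 0 ≤ θ)
    (hr₁ : 0 < r₁) (hr₁' : r₁ ≤ t0 k θ) (hσ : 0 ≤ σ) :
    (∀ r : ℝ, 0 ≤ r → 0 ≤ gfun k θ r₁ σ r ∧ gfun k θ r₁ σ r ≤ σ/2 * Hfun k θ r₁ r₁) ∧
    (∀ r ∈ Set.Ici r₁, gfun k θ r₁ σ r = gfun k θ r₁ σ r₁) ∧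
    (∀ r : ℝ, r ∈ Set.Ico (0:ℝ) r₁ ∨ r ∈ Set.Ioi r₁ →
      0 ≤ deriv (gfun k θ r₁ σ) r ∧ deriv (gfun k θ r₁ σ) r ≤ σ) := by
  refine ⟨fun r hr => ⟨gfun_nonneg hk hθ hr₁ hr₁' hσ hr, gfun_le hk hθ hr₁ hr₁' hσ r⟩,
    fun r hr => gfun_of_le hr, ?_⟩
  rintro r (⟨hr, hrr⟩ | hrr)
  · obtain ⟨d, hd, hd₀, hd₁⟩ := exists_hasDerivAt_gfun_le hk hθ hr₁ hr₁' hσ hr hrr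
    rw [hd.deriv]
    exact ⟨hd₀, hd₁⟩
  · rw [deriv_gfun_of_lt hrr]
    exact ⟨le_rfl, hσ⟩
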